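/- arXiv:2602.03413 — 3 statements merged into one kernel-verified Lean document; each statement's English description precedes it below -/
import Mathlib

section
/- Let μ be a probability measure on ℝ^d with a positive differentiable density (also denoted μ) whose potential f = −log μ has a β-Lipschitz gradient. Let v : ℝ^d → ℝ^d be a map with ∫‖v‖² dμ < ∞ and ∫|⟨∇log μ, v⟩| dμ < ∞, and for ε > 0 set T_ε = Id − εv. Then −∫ log( μ(T_ε(x)) / μ(x) ) dμ(x) ≤ ε ∫ ⟨∇log μ(x), v(x)⟩ dμ(x) + (β/2) ε² ∫ ‖v(x)‖² dμ(x). -/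
open MeasureTheory Filter
open scoped RealInnerProductSpace

noncomputable section

def IsRegularDensity (α β : ℝ) (d : ℕ) (ρ : EuclideanSpace ℝ (Fin d) → ℝ) : Prop :=
  (∀ x, 0 < ρ x) ∧ ContDiff ℝ (⊤ : ℕ∞) ρ ∧
  (∀ x y, -Real.log (ρ y) ≥ -Real.log (ρ x)
      + ⟪gradient (fun z => -Real.log (ρ z)) x, y - x⟫ + α / 2 * ‖y - x‖ ^ 2) ∧
  (∀ x y, ‖gradient (fun z => -Real.log (ρ z)) x
      - gradient (fun z => -Real.log (ρ z)) y‖ ≤ β * ‖x - y‖)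

def densMeasure {d : ℕ} (ρ : EuclideanSpace ℝ (Fin d) → ℝ) :
    Measure (EuclideanSpace ℝ (Fin d)) :=
  volume.withDensity fun x => ENNReal.ofReal (ρ x)

/-- KL divergence `∫ log (dν/dπ) dν`. -/
def KLm {Ω : Type*} [MeasurableSpace Ω] (ν π : Measure Ω) : ℝ :=
  ∫ x, Real.log ((ν.rnDeriv π x).toReal) ∂ν

/-- Wasserstein gradient of the KL functional, `∇ log (μ/π)`. -/
def wgrad {d : ℕ} (ρμ ρπ : EuclideanSpace ℝ (Fin d) → ℝ) (x : EuclideanSpace ℝ (Fin d)) :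
    EuclideanSpace ℝ (Fin d) :=
  gradient (fun z => Real.log (ρμ z / ρπ z)) x

/-- `‖∇ log (μ/π)‖²_μ`. -/
def gradNormSq {d : ℕ} (ρμ ρπ : EuclideanSpace ℝ (Fin d) → ℝ) : ℝ :=
  ∫ x, ‖wgrad ρμ ρπ x‖ ^ 2 ∂(densMeasure ρμ)

/-- Descent/Taylor bound for a function with a `β`-Lipschitz gradient. -/
lemma taylor_abs_bound {F : Type*} [NormedAddCommGroup F] [InnerProductSpace ℝ F]
    [CompleteSpace F] {f : F → ℝ} {g : F → F} {β : ℝ}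
    (hg : ∀ z, HasGradientAt f (g z) z)
    (hsm : ∀ x y, ‖g x - g y‖ ≤ β * ‖x - y‖) (x u : F) :
    |f (x + u) - f x - ⟪g x, u⟫| ≤ β / 2 * ‖u‖ ^ 2 := by
  set c : ℝ := ⟪g x, u⟫ with hc
  set G : ℝ → ℝ := fun t => f (x + t • u) - t * c - f x with hGdef
  have hG : ∀ t : ℝ, HasDerivAt G (⟪g (x + t • u) - g x, u⟫) t := by
    intro t
    have hline : HasDerivAt (fun t : ℝ => x + t • u) u t := by
      simpa using ((hasDerivAt_id t).smul_const u).const_add x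
    have h1 : HasDerivAt (fun t : ℝ => f (x + t • u)) ⟪g (x + t • u), u⟫ t := by
      have h := (hg (x + t • u)).hasFDerivAt.comp_hasDerivAt t hline
      simpa [InnerProductSpace.toDual_apply_apply, Function.comp_def] using h
    have h2 : HasDerivAt (fun t : ℝ => t * c) c t := by
      simpa using (hasDerivAt_id t).mul_const c
    simpa [hGdef, inner_sub_left] using (h1.sub h2).sub_const (f x)
  have key := image_norm_le_of_norm_deriv_right_le_deriv_boundary
    (a := 0) (b := 1) (f := G) (f' := fun t => ⟪g (x + t • u) - g x, u⟫)
    (B := fun t => β / 2 * ‖u‖ ^ 2 * t ^ 2) (B' := fun t => β * ‖u‖ ^ 2 * t)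
    (fun t _ => (hG t).continuousAt.continuousWithinAt)
    (fun t _ => (hG t).hasDerivWithinAt)
    (by simp [hGdef])
    (fun t => by
      have h : HasDerivAt (fun t : ℝ => β / 2 * ‖u‖ ^ 2 * t ^ 2)
          (β / 2 * ‖u‖ ^ 2 * (2 * t)) t := by
        simpa using (hasDerivAt_pow 2 t).const_mul (β / 2 * ‖u‖ ^ 2)
      convert h using 1
      ring)
    (fun t ht => by
      have h1 : |⟪g (x + t • u) - g x, u⟫| ≤ ‖g (x + t • u) - g x‖ * ‖u‖ :=
        abs_real_inner_le_norm _ _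
      have h2 : ‖g (x + t • u) - g x‖ ≤ β * ‖t • u‖ := by
        simpa using hsm (x + t • u) x
      have h3 : ‖t • u‖ = t * ‖u‖ := by
        rw [norm_smul, Real.norm_eq_abs, abs_of_nonneg ht.1]
      rw [Real.norm_eq_abs]
      calc |⟪g (x + t • u) - g x, u⟫| ≤ ‖g (x + t • u) - g x‖ * ‖u‖ := h1
        _ ≤ (β * ‖t • u‖) * ‖u‖ := mul_le_mul_of_nonneg_right h2 (norm_nonneg u)
        _ = β * ‖u‖ ^ 2 * t := by rw [h3]; ring)
  have h1 := key (Set.right_mem_Icc.2 zero_le_one)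
  have hG1 : G 1 = f (x + u) - f x - c := by
    simp [hGdef]
    ring
  rw [Real.norm_eq_abs, hG1] at h1
  simpa using h1

theorem log_density_smoothness_integral_bound (d : ℕ) (β : ℝ) (hβ : 0 < β)
    (ρ : EuclideanSpace ℝ (Fin d) → ℝ) (hpos : ∀ x, 0 < ρ x)
    (hdiff : Differentiable ℝ ρ)
    (hsmooth : ∀ x y, ‖gradient (fun z => -Real.log (ρ z)) x
      - gradient (fun z => -Real.log (ρ z)) y‖ ≤ β * ‖x - y‖)
    (v : EuclideanSpace ℝ (Fin d) → EuclideanSpace ℝ (Fin d)) (hv : Measurable v)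
    (hv2 : Integrable (fun x => ‖v x‖ ^ 2) (densMeasure ρ))
    (hv1 : Integrable (fun x => ⟪gradient (fun z => Real.log (ρ z)) x, v x⟫)
      (densMeasure ρ))
    (ε : ℝ) (hε : 0 < ε) :
    -∫ x, Real.log (ρ (x - ε • v x) / ρ x) ∂(densMeasure ρ)
      ≤ ε * ∫ x, ⟪gradient (fun z => Real.log (ρ z)) x, v x⟫ ∂(densMeasure ρ)
        + β / 2 * ε ^ 2 * ∫ x, ‖v x‖ ^ 2 ∂(densMeasure ρ) := by
  classical
  set μ := densMeasure ρ with hμ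
  set L : EuclideanSpace ℝ (Fin d) → EuclideanSpace ℝ (Fin d) :=
    fun x => gradient (fun z => Real.log (ρ z)) x with hLdef
  have hlogdiff : ∀ z, DifferentiableAt ℝ (fun z => Real.log (ρ z)) z :=
    fun z => (Real.differentiableAt_log (hpos z).ne').comp z (hdiff z)
  have hLg : ∀ z, HasGradientAt (fun z => Real.log (ρ z)) (L z) z :=
    fun z => (hlogdiff z).hasGradientAt
  have hfg : ∀ z, HasGradientAt (fun z => -Real.log (ρ z)) (-(L z)) z := by
    intro z
    have h := (hLg z).hasFDerivAt.neg
    rw [hasGradientAt_iff_hasFDerivAt, map_neg]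
    exact h
  have hgrad_eq : ∀ z, gradient (fun z => -Real.log (ρ z)) z = -(L z) :=
    fun z => (hfg z).gradient
  have hsm : ∀ x y, ‖(-(L x)) - (-(L y))‖ ≤ β * ‖x - y‖ := by
    intro x y
    have := hsmooth x y
    rwa [hgrad_eq, hgrad_eq] at this
  -- pointwise key bound
  have key : ∀ x, |(-Real.log (ρ (x - ε • v x)) + Real.log (ρ x)) - ε * ⟪L x, v x⟫|
      ≤ β / 2 * ε ^ 2 * ‖v x‖ ^ 2 := by
    intro x
    have h := taylor_abs_bound (f := fun z => -Real.log (ρ z)) (g := fun z => -(L z))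
      hfg hsm x (-(ε • v x))
    have h1 : x + -(ε • v x) = x - ε • v x := by abel
    have h2 : ⟪-(L x), -(ε • v x)⟫ = ε * ⟪L x, v x⟫ := by
      rw [inner_neg_neg, real_inner_smul_right]
    have h3 : ‖-(ε • v x)‖ ^ 2 = ε ^ 2 * ‖v x‖ ^ 2 := by
      rw [norm_neg, norm_smul, mul_pow, Real.norm_eq_abs, sq_abs]
    rw [h1, h2, h3] at h
    calc |(-Real.log (ρ (x - ε • v x)) + Real.log (ρ x)) - ε * ⟪L x, v x⟫|
        = |(-Real.log (ρ (x - ε • v x)) - -Real.log (ρ x)) - ε * ⟪L x, v x⟫| := by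
          ring_nf
      _ ≤ β / 2 * (ε ^ 2 * ‖v x‖ ^ 2) := h
      _ = β / 2 * ε ^ 2 * ‖v x‖ ^ 2 := by ring
  -- integrability
  have hmeasG : AEStronglyMeasurable
      (fun x => -Real.log (ρ (x - ε • v x)) + Real.log (ρ x)) μ := by
    have hc : Continuous ρ := hdiff.continuous
    have hm : Measurable fun x : EuclideanSpace ℝ (Fin d) => x - ε • v x :=
      measurable_id.sub (hv.const_smul ε)
    exact ((Real.measurable_log.comp (hc.measurable.comp hm)).neg.add
      (Real.measurable_log.comp hc.measurable)).aestronglyMeasurable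
  have hmaj : Integrable (fun x => |ε * ⟪L x, v x⟫| + β / 2 * ε ^ 2 * ‖v x‖ ^ 2) μ :=
    ((hv1.const_mul ε).abs).add (hv2.const_mul _)
  have hGint : Integrable (fun x => -Real.log (ρ (x - ε • v x)) + Real.log (ρ x)) μ := by
    refine hmaj.mono' hmeasG (Eventually.of_forall fun x => ?_)
    rw [Real.norm_eq_abs]
    have hk := key x
    set a : ℝ := -Real.log (ρ (x - ε • v x)) + Real.log (ρ x)
    set b : ℝ := ε * ⟪L x, v x⟫
    calc |a| = |(a - b) + b| := by ring_nf
      _ ≤ |a - b| + |b| := abs_add_le _ _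
      _ ≤ β / 2 * ε ^ 2 * ‖v x‖ ^ 2 + |b| := by linarith
      _ = |b| + β / 2 * ε ^ 2 * ‖v x‖ ^ 2 := by ring
  have hrhs : Integrable (fun x => ε * ⟪L x, v x⟫ + β / 2 * ε ^ 2 * ‖v x‖ ^ 2) μ :=
    (hv1.const_mul ε).add (hv2.const_mul _)
  have hmono : ∫ x, (-Real.log (ρ (x - ε • v x)) + Real.log (ρ x)) ∂μ
      ≤ ∫ x, (ε * ⟪L x, v x⟫ + β / 2 * ε ^ 2 * ‖v x‖ ^ 2) ∂μ := by
    refine integral_mono hGint hrhs fun x => ?_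
    have hk := (abs_le.1 (key x)).2
    dsimp only
    linarith
  calc -∫ x, Real.log (ρ (x - ε • v x) / ρ x) ∂μ
      = ∫ x, (-Real.log (ρ (x - ε • v x)) + Real.log (ρ x)) ∂μ := by
        rw [← integral_neg]
        refine integral_congr_ae (Eventually.of_forall fun x => ?_)
        dsimp only
        rw [Real.log_div (hpos _).ne' (hpos _).ne']
        ring
    _ ≤ ∫ x, (ε * ⟪L x, v x⟫ + β / 2 * ε ^ 2 * ‖v x‖ ^ 2) ∂μ := hmono
    _ = ε * ∫ x, ⟪L x, v x⟫ ∂μ + β / 2 * ε ^ 2 * ∫ x, ‖v x‖ ^ 2 ∂μ := by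
        rw [integral_add (hv1.const_mul ε) (hv2.const_mul _), integral_const_mul,
          integral_const_mul]
end
end

section
/- Let ρ : ℝ^d → ℝ be a continuously differentiable, strictly positive probability density with ∫ ‖∇log ρ(x)‖² ρ(x) dx < ∞, and let s : ℝ^d → ℝ^d be a continuously differentiable vector field with compact support. Then (1/2) ∫ ‖s(x) − ∇log ρ(x)‖² ρ(x) dx = ∫ ( div s(x) + (1/2)‖s(x)‖² ) ρ(x) dx + (1/2) ∫ ‖∇log ρ(x)‖² ρ(x) dx. In particular, minimizing the score-matching loss (1/2)E_{x∼ρ}‖s(x) − ∇log ρ(x)‖² over s is equivalent to minimizing E_{x∼ρ}[ tr(∇s(x)) + (1/2)‖s(x)‖² ], since tr(∇s) = div s and the last term does not depend on s. -/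
/-!
Expanding the square, the only term coupling `s` to the score is `⟪s, ∇log ρ⟫ ρ = ⟪s, ∇ρ⟫ = Dρ(s)`.
Writing `Dρ(s) = ∑ᵢ sᵢ ∂ᵢρ` and integrating by parts in each coordinate, with no boundary terms
because `s` has compact support, gives `∫ Dρ(s) = -∫ (div s) ρ`.
-/

open MeasureTheory
open scoped RealInnerProductSpace

noncomputable section

/-- Divergence of a vector field on `ℝ^d`: `div s x = ∑ i ∂sᵢ/∂xᵢ (x) = tr(∇s(x))`. -/
def diverg {d : ℕ} (s : EuclideanSpace ℝ (Fin d) → EuclideanSpace ℝ (Fin d))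
    (x : EuclideanSpace ℝ (Fin d)) : ℝ :=
  ∑ i, fderiv ℝ (fun y => s y i) x (EuclideanSpace.single i 1)

theorem inner_gradient_log_mul_eq_fderiv {E : Type*} [NormedAddCommGroup E]
    [InnerProductSpace ℝ E] [CompleteSpace E] {ρ : E → ℝ} {x : E}
    (hρ : DifferentiableAt ℝ ρ x) (hx : ρ x ≠ 0) (v : E) :
    ⟪v, gradient (fun z => Real.log (ρ z)) x⟫ * ρ x = fderiv ℝ ρ x v := by
  rw [gradient, real_inner_comm, InnerProductSpace.toDual_symm_apply,
    (hρ.hasFDerivAt.log hx).fderiv, smul_apply, smul_eq_mul]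
  field_simp

section IntegrationByParts

variable {E : Type*} [NormedAddCommGroup E] [NormedSpace ℝ E] [FiniteDimensional ℝ E]
  [MeasurableSpace E] [BorelSpace E] {μ : Measure E} [μ.IsAddHaarMeasure]

theorem integral_mul_fderiv_eq_neg_fderiv_mul_of_hasCompactSupport {f g : E → ℝ}
    (hf : ContDiff ℝ 1 f) (hg : ContDiff ℝ 1 g) (hfc : HasCompactSupport f) (v : E) :
    ∫ x, f x * fderiv ℝ g x v ∂μ = -∫ x, fderiv ℝ f x v * g x ∂μ := by
  have hf' := (hf.continuous_fderiv one_ne_zero).clm_apply (continuous_const (y := v))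
  have hg' := (hg.continuous_fderiv one_ne_zero).clm_apply (continuous_const (y := v))
  refine integral_mul_fderiv_eq_neg_fderiv_mul_of_integrable ?_ ?_ ?_
    (fun x _ => hf.differentiable one_ne_zero x) (fun x _ => hg.differentiable one_ne_zero x)
  · exact (hf'.mul hg.continuous).integrable_of_hasCompactSupport
      (hfc.fderiv_apply (𝕜 := ℝ) v).mul_right
  · exact (hf.continuous.mul hg').integrable_of_hasCompactSupport hfc.mul_right
  · exact (hf.continuous.mul hg.continuous).integrable_of_hasCompactSupport hfc.mul_right

end IntegrationByParts

theorem EuclideanSpace.clm_apply_eq_sum {ι F : Type*} [Fintype ι] [DecidableEq ι]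
    [NormedAddCommGroup F] [NormedSpace ℝ F]
    (L : EuclideanSpace ℝ ι →L[ℝ] F) (v : EuclideanSpace ℝ ι) :
    L v = ∑ i, v i • L (EuclideanSpace.single i 1) := by
  conv_lhs => rw [← (EuclideanSpace.basisFun ι ℝ).sum_repr v]
  simp

theorem HasCompactSupport.clm_apply {X R E F : Type*} [TopologicalSpace X] [Semiring R]
    [TopologicalSpace E] [AddCommMonoid E] [Module R E] [TopologicalSpace F] [AddCommMonoid F]
    [Module R F] (L : X → E →L[R] F) {s : X → E} (hs : HasCompactSupport s) :
    HasCompactSupport fun x => L x (s x) :=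
  hs.mono' <| Function.support_subset_iff'.2 fun x hx => by
    rw [image_eq_zero_of_notMem_tsupport hx, map_zero]

section Divergence

variable {d : ℕ} {s : EuclideanSpace ℝ (Fin d) → EuclideanSpace ℝ (Fin d)}

theorem ContDiff.continuous_diverg (hs : ContDiff ℝ 1 s) : Continuous (diverg s) :=
  continuous_finsetSum _ fun i _ =>
    (((contDiff_piLp 2).1 hs i).continuous_fderiv one_ne_zero).clm_apply continuous_const

theorem diverg_eq_zero_of_notMem_tsupport {x : EuclideanSpace ℝ (Fin d)} (hx : x ∉ tsupport s) :
    diverg s x = 0 :=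
  Finset.sum_eq_zero fun i _ => by
    rw [fderiv_of_notMem_tsupport ℝ (f := fun y => s y i) fun h =>
        hx (tsupport_comp_subset (g := fun v : EuclideanSpace ℝ (Fin d) => v i) rfl s h),
      zero_apply]

theorem HasCompactSupport.diverg (hsupp : HasCompactSupport s) : HasCompactSupport (diverg s) :=
  HasCompactSupport.intro hsupp fun _ => diverg_eq_zero_of_notMem_tsupport

theorem integral_fderiv_apply_eq_neg_integral_diverg_mul {ρ : EuclideanSpace ℝ (Fin d) → ℝ}
    (hρ : ContDiff ℝ 1 ρ) (hs : ContDiff ℝ 1 s) (hsupp : HasCompactSupport s) :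
    ∫ x, fderiv ℝ ρ x (s x) = -∫ x, diverg s x * ρ x := by
  have hs_coord i : ContDiff ℝ 1 (fun x => s x i) := (contDiff_piLp 2).1 hs i
  have hsupp_coord i : HasCompactSupport (fun x => s x i) :=
    hsupp.comp_left (g := fun v : EuclideanSpace ℝ (Fin d) => v i) rfl
  have hint_s_dρ i : Integrable (fun x => s x i * fderiv ℝ ρ x (EuclideanSpace.single i 1)) :=
    ((hs_coord i).continuous.mul ((hρ.continuous_fderiv one_ne_zero).clm_apply continuous_const)
      ).integrable_of_hasCompactSupport (hsupp_coord i).mul_right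
  have hint_ds_ρ i : Integrable
      (fun x => fderiv ℝ (fun y => s y i) x (EuclideanSpace.single i 1) * ρ x) :=
    ((((hs_coord i).continuous_fderiv one_ne_zero).clm_apply continuous_const).mul hρ.continuous
      ).integrable_of_hasCompactSupport ((hsupp_coord i).fderiv_apply (𝕜 := ℝ) _).mul_right
  calc ∫ x, fderiv ℝ ρ x (s x)
      = ∑ i, ∫ x, s x i * fderiv ℝ ρ x (EuclideanSpace.single i 1) := by
        simp_rw [EuclideanSpace.clm_apply_eq_sum (fderiv ℝ ρ _) (s _), smul_eq_mul]
        exact integral_finsetSum _ fun i _ => hint_s_dρ i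
    _ = ∑ i, -∫ x, fderiv ℝ (fun y => s y i) x (EuclideanSpace.single i 1) * ρ x :=
        Finset.sum_congr rfl fun i _ =>
          integral_mul_fderiv_eq_neg_fderiv_mul_of_hasCompactSupport (hs_coord i) hρ
            (hsupp_coord i) _
    _ = -∫ x, diverg s x * ρ x := by
        simp_rw [diverg, Finset.sum_mul]
        rw [integral_finsetSum _ fun i _ => hint_ds_ρ i, Finset.sum_neg_distrib]

end Divergence

theorem score_matching_identity_general (d : ℕ)
    (ρ : EuclideanSpace ℝ (Fin d) → ℝ)
    (hρ : ContDiff ℝ 1 ρ) (hpos : ∀ x, 0 < ρ x)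
    (hscore : Integrable (fun x => ‖gradient (fun z => Real.log (ρ z)) x‖ ^ 2 * ρ x))
    (s : EuclideanSpace ℝ (Fin d) → EuclideanSpace ℝ (Fin d))
    (hs : ContDiff ℝ 1 s) (hsupp : HasCompactSupport s) :
    (1 / 2) * ∫ x, ‖s x - gradient (fun z => Real.log (ρ z)) x‖ ^ 2 * ρ x
      = (∫ x, (diverg s x + (1 / 2) * ‖s x‖ ^ 2) * ρ x)
        + (1 / 2) * ∫ x, ‖gradient (fun z => Real.log (ρ z)) x‖ ^ 2 * ρ x := by
  set score := gradient (fun z => Real.log (ρ z))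
  have hint_cross : Integrable fun x => fderiv ℝ ρ x (s x) :=
    ((hρ.continuous_fderiv one_ne_zero).clm_apply hs.continuous).integrable_of_hasCompactSupport
      (hsupp.clm_apply _)
  have hint_sq : Integrable fun x => ‖s x‖ ^ 2 * ρ x := by
    have hc : HasCompactSupport fun x => ‖s x‖ ^ 2 :=
      hsupp.comp_left (g := fun v : EuclideanSpace ℝ (Fin d) => ‖v‖ ^ 2) (by simp)
    exact ((hs.continuous.norm.pow 2).mul hρ.continuous).integrable_of_hasCompactSupport
      hc.mul_right
  have hint_div : Integrable fun x => diverg s x * ρ x :=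
    (hs.continuous_diverg.mul hρ.continuous).integrable_of_hasCompactSupport
      hsupp.diverg.mul_right
  have hexpand : (fun x => ‖s x - score x‖ ^ 2 * ρ x)
      = fun x => (‖s x‖ ^ 2 * ρ x - 2 * fderiv ℝ ρ x (s x)) + ‖score x‖ ^ 2 * ρ x :=
    funext fun x => by
      rw [norm_sub_sq_real, ← inner_gradient_log_mul_eq_fderiv
        (hρ.differentiable one_ne_zero x) (hpos x).ne' (s x)]
      ring
  have hsplit : (fun x => (diverg s x + 1 / 2 * ‖s x‖ ^ 2) * ρ x)
      = fun x => diverg s x * ρ x + 1 / 2 * (‖s x‖ ^ 2 * ρ x) :=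
    funext fun x => by ring
  have hint_sq_sub_cross : Integrable fun x => ‖s x‖ ^ 2 * ρ x - 2 * fderiv ℝ ρ x (s x) :=
    hint_sq.sub (hint_cross.const_mul 2)
  rw [hexpand, hsplit, integral_add hint_sq_sub_cross hscore,
    integral_sub hint_sq (hint_cross.const_mul 2), integral_add hint_div (hint_sq.const_mul _),
    integral_const_mul, integral_const_mul,
    integral_fderiv_apply_eq_neg_integral_diverg_mul hρ hs hsupp]
  ring

/-- Hyvärinen's score-matching identity. -/
theorem score_matching_identity (d : ℕ)
    (ρ : EuclideanSpace ℝ (Fin d) → ℝ)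
    (hρ : ContDiff ℝ 1 ρ) (hpos : ∀ x, 0 < ρ x)
    (hint : ∫ x, ρ x = 1)
    (hscore : Integrable (fun x => ‖gradient (fun z => Real.log (ρ z)) x‖ ^ 2 * ρ x))
    (s : EuclideanSpace ℝ (Fin d) → EuclideanSpace ℝ (Fin d))
    (hs : ContDiff ℝ 1 s) (hsupp : HasCompactSupport s) :
    (1 / 2) * ∫ x, ‖s x - gradient (fun z => Real.log (ρ z)) x‖ ^ 2 * ρ x
      = (∫ x, (diverg s x + (1 / 2) * ‖s x‖ ^ 2) * ρ x)
        + (1 / 2) * ∫ x, ‖gradient (fun z => Real.log (ρ z)) x‖ ^ 2 * ρ x :=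
  score_matching_identity_general d ρ hρ hpos hscore s hs hsupp
end
end

section
/- Let α, β, C > 0 and let (η_k)_{k≥0} be positive reals with (3/2)βη_k ≤ 1 for all k. Let (F_k)_{k≥0} be nonnegative reals satisfying, for all k, F_{k+1} ≤ F_k and F_{k+1} ≤ F_k − 2αη_k(1 − (3/2)βη_k)F_k + Cη_k². Then for every T with 1 + 2α Σ_{k=0}^T η_k − 3αβ Σ_{k=0}^T η_k² > 0, one has F_{T+1} ≤ (F_0 + C Σ_{k=0}^T η_k²) / (1 + 2α Σ_{k=0}^T η_k − 3αβ Σ_{k=0}^T η_k²). Moreover, if Σ_{k=0}^∞ η_k = ∞ and Σ_{k=0}^∞ η_k² < ∞, then F_T → 0 as T → ∞. -/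
/-!
With weights `c k = 2αη_k(1 - (3/2)βη_k) ≥ 0` the recursion reads
`F (k+1) ≤ F k - c k F k + C η_k²`. As `F` is nonincreasing, `c k F k ≥ c k F (k+1)`,
so telescoping gives `F (T+1) + ∑_{k ≤ T} c k F (k+1) ≤ F 0 + C ∑_{k ≤ T} η_k²`.
Bounding every `F (k+1)` below by `F (T+1)` yields the estimate, whose denominator is `1 + ∑_{k ≤ T} c k`.
When `∑ η_k = ∞` and `∑ η_k² < ∞`, this denominator tends to infinity while the numerator
stays bounded.
-/

open Filter Finset

section AntitoneRecursion

variable {F c d : ℕ → ℝ} (hmono : ∀ k, F (k + 1) ≤ F k) (hc : ∀ k, 0 ≤ c k)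
  (hrec : ∀ k, F (k + 1) ≤ F k - c k * F k + d k)
include hmono hc hrec

theorem add_sum_mul_succ_le_of_recursion (n : ℕ) :
    F n + ∑ k ∈ range n, c k * F (k + 1) ≤ F 0 + ∑ k ∈ range n, d k := by
  induction n with
  | zero => simp
  | succ n ih =>
    rw [sum_range_succ, sum_range_succ]
    have hstep : c n * F (n + 1) ≤ c n * F n := mul_le_mul_of_nonneg_left (hmono n) (hc n)
    linarith [hrec n]

theorem mul_one_add_sum_le_of_recursion (n : ℕ) :
    F n * (1 + ∑ k ∈ range n, c k) ≤ F 0 + ∑ k ∈ range n, d k := by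
  have hanti : Antitone F := antitone_nat_of_succ_le hmono
  have hlower : ∑ k ∈ range n, c k * F n ≤ ∑ k ∈ range n, c k * F (k + 1) :=
    sum_le_sum fun k hk => mul_le_mul_of_nonneg_left (hanti (mem_range.mp hk)) (hc k)
  rw [← sum_mul] at hlower
  linarith [add_sum_mul_succ_le_of_recursion hmono hc hrec n]

theorem tendsto_zero_of_recursion (hF : ∀ k, 0 ≤ F k)
    (hc_sum : Tendsto (fun n => ∑ k ∈ range n, c k) atTop atTop)
    {B : ℝ} (hd_sum : ∀ n, ∑ k ∈ range n, d k ≤ B) :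
    Tendsto F atTop (nhds 0) := by
  have hden : ∀ n, 0 < 1 + ∑ k ∈ range n, c k := fun n =>
    add_pos_of_pos_of_nonneg one_pos (sum_nonneg fun k _ => hc k)
  have hupper : ∀ n, F n ≤ (F 0 + B) / (1 + ∑ k ∈ range n, c k) := fun n => by
    rw [le_div_iff₀ (hden n)]
    linarith [mul_one_add_sum_le_of_recursion hmono hc hrec n, hd_sum n]
  refine tendsto_of_tendsto_of_tendsto_of_le_of_le tendsto_const_nhds ?_ hF hupper
  exact tendsto_const_nhds.div_atTop (tendsto_atTop_add_const_left _ 1 hc_sum)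

end AntitoneRecursion

theorem sum_step_weight (α β : ℝ) (η : ℕ → ℝ) (n : ℕ) :
    ∑ k ∈ range n, 2 * α * η k * (1 - 3 / 2 * β * η k)
      = 2 * α * ∑ k ∈ range n, η k - 3 * α * β * ∑ k ∈ range n, η k ^ 2 := by
  rw [mul_sum, mul_sum, ← sum_sub_distrib]
  exact sum_congr rfl fun k _ => by ring

theorem wgd_recursion_lemma (α β C : ℝ) (hα : 0 < α) (hβ : 0 < β) (hC : 0 < C)
    (η : ℕ → ℝ) (hη : ∀ k, 0 < η k) (hηβ : ∀ k, 3 / 2 * β * η k ≤ 1)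
    (F : ℕ → ℝ) (hF : ∀ k, 0 ≤ F k)
    (hmono : ∀ k, F (k + 1) ≤ F k)
    (hrec : ∀ k, F (k + 1) ≤ F k - 2 * α * η k * (1 - 3 / 2 * β * η k) * F k
      + C * η k ^ 2) :
    (∀ T : ℕ,
      0 < 1 + 2 * α * ∑ k ∈ Finset.range (T + 1), η k
          - 3 * α * β * ∑ k ∈ Finset.range (T + 1), η k ^ 2 →
      F (T + 1) ≤ (F 0 + C * ∑ k ∈ Finset.range (T + 1), η k ^ 2)
        / (1 + 2 * α * ∑ k ∈ Finset.range (T + 1), η k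
          - 3 * α * β * ∑ k ∈ Finset.range (T + 1), η k ^ 2)) ∧
    ((Tendsto (fun T => ∑ k ∈ Finset.range T, η k) atTop atTop ∧
        Summable fun k => η k ^ 2) →
      Tendsto F atTop (nhds 0)) := by
  have hweight : ∀ k, 0 ≤ 2 * α * η k * (1 - 3 / 2 * β * η k) := fun k =>
    mul_nonneg (mul_pos (mul_pos two_pos hα) (hη k)).le (by linarith [hηβ k])
  have hbound := mul_one_add_sum_le_of_recursion hmono hweight hrec
  simp only [sum_step_weight, ← mul_sum, ← add_sub_assoc] at hbound
  refine ⟨fun T hD => (le_div_iff₀ hD).mpr (hbound (T + 1)), fun ⟨hS, hQ⟩ => ?_⟩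
  set Q := ∑' k, η k ^ 2
  have hQ_le : ∀ n, ∑ k ∈ range n, η k ^ 2 ≤ Q := fun n =>
    hQ.sum_le_tsum _ fun k _ => sq_nonneg _
  have hweight_sum : Tendsto (fun n => ∑ k ∈ range n, 2 * α * η k * (1 - 3 / 2 * β * η k))
      atTop atTop := by
    simp only [sum_step_weight]
    have hlin := hS.const_mul_atTop (by positivity : (0 : ℝ) < 2 * α)
    refine tendsto_atTop_mono (fun n => ?_)
      (tendsto_atTop_add_const_right _ (-(3 * α * β * Q)) hlin)
    nlinarith [hQ_le n, mul_pos hα hβ]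
  refine tendsto_zero_of_recursion hmono hweight hrec hF hweight_sum (B := C * Q) fun n => ?_
  rw [← mul_sum]
  exact mul_le_mul_of_nonneg_left (hQ_le n) hC.le
end
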